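/- Let d ≥ 1, let S be a unit d-sphere (total surface area 1), and let a, b ∈ S be distinct points with orthodromic distance δ(a,b). Then every spherical cap C of S whose boundary relative to S contains both a and b has surface area at least A_d(δ(a,b)); that is, the smallest-area spherical cap whose boundary passes through a and b is the cap having orthodromic diameter δ(a,b). -/

import Mathlib

/-!
STATEMENT 19: On a unit `d`-sphere (a `d`-dimensional sphere in `ℝ^{d+1}` of
total surface area 1), for distinct points `a, b` on the sphere, every spherical
cap whose boundary relative to the sphere contains both `a` and `b` has surface
area at least `A_d(δ(a,b))`: the smallest-area cap whose boundary passes through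
`a` and `b` is the one of orthodromic diameter `δ(a,b)`.

The normalized surface measure on the sphere of radius `r` centered at the
origin is formalized as a probability measure `μ` concentrated on the sphere and
invariant under all linear isometries of the ambient space; a spherical cap is
`{p | c ≤ ⟪v, p⟫}` intersected with the sphere (on which `μ` is concentrated),
its boundary relative to the sphere is cut out by the hyperplane
`{p | ⟪v, p⟫ = c}`; the orthodromic distance of `a, b` is `r * angle a b`;
`A_d(x)` (`capArea μ r x`) is the `μ`-measure of a cap of orthodromic diameter
`x` (half-angle `x/(2r)`); the unit-area condition pins down the radius `r`.
-/

noncomputable section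

open MeasureTheory Real

local notation "⟪" x ", " y "⟫" => @inner ℝ _ _ x y

/-- `A_d(x)`: the measure (w.r.t. the normalized surface measure `μ`) of a spherical
cap of orthodromic diameter `x`, i.e. of half-angle `x/(2r)`, on the sphere of
radius `r` centered at the origin. -/
def capArea {m : ℕ} [NeZero m] (μ : Measure (EuclideanSpace ℝ (Fin m)))
    (r x : ℝ) : ℝ :=
  (μ {p | r * Real.cos (x / (2 * r)) ≤ ⟪EuclideanSpace.single (0 : Fin m) (1 : ℝ), p⟫}).toReal


/-!
Reflect the unit normal of the cap onto the pole `e₀`; by isometry invariance the cap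
becomes `{p | c / ‖v‖ ≤ ⟪e₀, p⟫}` without changing its measure. Since `a` and `b` lie on the
boundary, `2c = ⟪v, a + b⟫ ≤ ‖v‖ ‖a + b‖ = 2 ‖v‖ r cos (θ / 2)` with `θ` the angle between `a`
and `b`, so the reflected cap contains the cap of half-angle `θ / 2` about `e₀`, whose orthodromic
diameter is `r θ = δ(a, b)`.
-/

open InnerProductGeometry

section InnerProductSpace

variable {E : Type*} [NormedAddCommGroup E] [InnerProductSpace ℝ E]

theorem norm_add_eq_two_mul_norm_mul_cos_half_angle {x y : E} (h : ‖x‖ = ‖y‖) :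
    ‖x + y‖ = 2 * ‖x‖ * Real.cos (angle x y / 2) := by
  have hcos : 0 ≤ Real.cos (angle x y / 2) :=
    Real.cos_nonneg_of_mem_Icc ⟨by linarith [angle_nonneg x y, Real.pi_pos],
      by linarith [angle_le_pi x y]⟩
  have hcos_sq : Real.cos (angle x y / 2) ^ 2 = 1 / 2 + Real.cos (angle x y) / 2 := by
    rw [Real.cos_sq, show 2 * (angle x y / 2) = angle x y by ring]
  refine (pow_left_inj₀ (norm_nonneg _) (by positivity) two_ne_zero).1 ?_
  rw [norm_add_sq_real, ← cos_angle_mul_norm_mul_norm, ← h, mul_pow, mul_pow, hcos_sq]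
  ring

theorem real_inner_le_norm_mul_norm_mul_cos_half_angle {v x y : E} (h : ‖x‖ = ‖y‖)
    (hxy : ⟪v, x⟫ = ⟪v, y⟫) : ⟪v, x⟫ ≤ ‖v‖ * ‖x‖ * Real.cos (angle x y / 2) := by
  have hsum : ⟪v, x + y⟫ = 2 * ⟪v, x⟫ := by rw [inner_add_right, ← hxy]; ring
  have := real_inner_le_norm v (x + y)
  rw [hsum, norm_add_eq_two_mul_norm_mul_cos_half_angle h] at this
  linarith

variable [MeasurableSpace E] [BorelSpace E] {μ : Measure E}

theorem measure_setOf_le_inner_eq_of_norm_eq (hμ : ∀ g : E ≃ₗᵢ[ℝ] E, μ.map g = μ)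
    {v w : E} (h : ‖v‖ = ‖w‖) (c : ℝ) :
    μ {p | c ≤ ⟪v, p⟫} = μ {p | c ≤ ⟪w, p⟫} := by
  set g : E ≃ₗᵢ[ℝ] E := Submodule.reflection (ℝ ∙ (v - w))ᗮ
  have hgv : g v = w := Submodule.reflection_sub h
  have hpre : {p | c ≤ ⟪v, p⟫} = g ⁻¹' {p | c ≤ ⟪w, p⟫} := by
    ext p
    change c ≤ ⟪v, p⟫ ↔ c ≤ ⟪w, g p⟫
    rw [← hgv, g.inner_map_map]
  have hmeas : MeasurableSet {p : E | c ≤ ⟪w, p⟫} :=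
    measurableSet_le measurable_const (continuous_const.inner continuous_id).measurable
  rw [hpre, ← Measure.map_apply g.continuous.measurable hmeas, hμ]

theorem measure_setOf_le_inner_eq_of_norm_eq_one (hμ : ∀ g : E ≃ₗᵢ[ℝ] E, μ.map g = μ)
    {v u : E} (hv : v ≠ 0) (hu : ‖u‖ = 1) (c : ℝ) :
    μ {p | c ≤ ⟪v, p⟫} = μ {p | c / ‖v‖ ≤ ⟪u, p⟫} := by
  have hv' : 0 < ‖v‖ := norm_pos_iff.2 hv
  have hset : {p | c ≤ ⟪v, p⟫} = {p | c / ‖v‖ ≤ ⟪‖v‖⁻¹ • v, p⟫} := by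
    ext p
    simp only [Set.mem_ofPred_eq, real_inner_smul_left, inv_mul_eq_div,
      div_le_div_iff_of_pos_right hv']
  have hnorm : ‖‖v‖⁻¹ • v‖ = ‖u‖ := by
    rw [norm_smul, norm_inv, norm_norm, inv_mul_cancel₀ hv'.ne', hu]
  rw [hset, measure_setOf_le_inner_eq_of_norm_eq hμ hnorm]

end InnerProductSpace

theorem smallest_cap_through_two_points_general
    (d : ℕ)
    (r : ℝ) (hr : 0 < r)
    -- `μ` is the uniform (normalized surface) probability measure on the sphere:
    (μ : Measure (EuclideanSpace ℝ (Fin (d + 1)))) [IsProbabilityMeasure μ]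
    (hinv : ∀ g : EuclideanSpace ℝ (Fin (d + 1)) ≃ₗᵢ[ℝ] EuclideanSpace ℝ (Fin (d + 1)),
      Measure.map g μ = μ)
    (a b : EuclideanSpace ℝ (Fin (d + 1)))
    (ha : a ∈ Metric.sphere (0 : EuclideanSpace ℝ (Fin (d + 1))) r)
    (hb : b ∈ Metric.sphere (0 : EuclideanSpace ℝ (Fin (d + 1))) r)
    -- an arbitrary spherical cap `{p | c ≤ ⟪v, p⟫}` whose boundary contains `a`, `b`:
    (v : EuclideanSpace ℝ (Fin (d + 1))) (c : ℝ) (hv : v ≠ 0)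
    (hva : ⟪v, a⟫ = c) (hvb : ⟪v, b⟫ = c) :
    capArea μ r (r * InnerProductGeometry.angle a b) ≤
      (μ {p | c ≤ ⟪v, p⟫}).toReal := by
  have hna : ‖a‖ = r := by simpa using ha
  have hnb : ‖b‖ = r := by simpa using hb
  have hc : c / ‖v‖ ≤ r * Real.cos (angle a b / 2) := by
    rw [div_le_iff₀ (norm_pos_iff.2 hv), ← hva]
    have := real_inner_le_norm_mul_norm_mul_cos_half_angle (hna.trans hnb.symm)
      (hva.trans hvb.symm)
    rw [hna] at this
    linarith
  rw [measure_setOf_le_inner_eq_of_norm_eq_one hinv hv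
    (u := EuclideanSpace.single 0 1) (by simp) c, capArea,
    show r * angle a b / (2 * r) = angle a b / 2 by field_simp]
  exact ENNReal.toReal_mono (measure_ne_top _ _) (measure_mono fun p hp => hc.trans hp)

theorem smallest_cap_through_two_points
    (d : ℕ) (hd : 1 ≤ d)
    (r : ℝ) (hr : 0 < r)
    -- the sphere of radius `r` in `ℝ^{d+1}` has total surface area 1
    (harea : ((d : ℝ) + 1) * (Real.sqrt π ^ (d + 1) / Real.Gamma (((d : ℝ) + 1) / 2 + 1))
        * r ^ d = 1)
    -- `μ` is the uniform (normalized surface) probability measure on the sphere: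
    (μ : Measure (EuclideanSpace ℝ (Fin (d + 1)))) [IsProbabilityMeasure μ]
    (hsupp : μ (Metric.sphere (0 : EuclideanSpace ℝ (Fin (d + 1))) r) = 1)
    (hinv : ∀ g : EuclideanSpace ℝ (Fin (d + 1)) ≃ₗᵢ[ℝ] EuclideanSpace ℝ (Fin (d + 1)),
      Measure.map g μ = μ)
    (a b : EuclideanSpace ℝ (Fin (d + 1)))
    (ha : a ∈ Metric.sphere (0 : EuclideanSpace ℝ (Fin (d + 1))) r)
    (hb : b ∈ Metric.sphere (0 : EuclideanSpace ℝ (Fin (d + 1))) r)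
    (hab : a ≠ b)
    -- an arbitrary spherical cap `{p | c ≤ ⟪v, p⟫}` whose boundary contains `a`, `b`:
    (v : EuclideanSpace ℝ (Fin (d + 1))) (c : ℝ) (hv : v ≠ 0)
    (hva : ⟪v, a⟫ = c) (hvb : ⟪v, b⟫ = c) :
    capArea μ r (r * InnerProductGeometry.angle a b) ≤
      (μ {p | c ≤ ⟪v, p⟫}).toReal :=
  smallest_cap_through_two_points_general d r hr μ hinv a b ha hb v c hv hva hvb
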